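/- For any commutative Noetherian ring R, Γ_E(R) is not a finite regular graph with more than two vertices; i.e., if Γ_E(R) is finite with at least 3 vertices, then there exist vertices of different degrees. -/

import Mathlib

open scoped Classical

noncomputable section

/-- The annihilator ideal of an element `x` of a commutative ring `R`. -/
def ann (R : Type*) [CommRing R] (x : R) : Ideal R := Ideal.torsionOf R R x

/-- The type of nonzero zero divisors of `R`. -/
def ZD (R : Type*) [CommRing R] : Type _ :=
  {x : R // x ≠ 0 ∧ ∃ y : R, y ≠ 0 ∧ x * y = 0}

/-- Two zero divisors are equivalent iff they have the same annihilator. -/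
instance annSetoid (R : Type*) [CommRing R] : Setoid (ZD R) :=
  ⟨fun a b => ann R a.1 = ann R b.1,
   fun _ => rfl, Eq.symm, Eq.trans⟩

/-- The vertex set of `Γ_E(R)`: equivalence classes of nonzero zero divisors. -/
def GammaEV (R : Type*) [CommRing R] : Type _ := Quotient (annSetoid R)

/-- The class of a nonzero zero divisor. -/
def cls (R : Type*) [CommRing R] (a : ZD R) : GammaEV R :=
  Quotient.mk (annSetoid R) a

/-- The graph `Γ_E(R)` of equivalence classes of zero divisors. -/
def gammaE (R : Type*) [CommRing R] : SimpleGraph (GammaEV R) where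
  Adj u v := u ≠ v ∧ ∃ a b : ZD R, cls R a = u ∧ cls R b = v ∧ a.1 * b.1 = 0
  symm := by
    constructor
    rintro u v ⟨huv, a, b, ha, hb, hab⟩
    exact ⟨huv.symm, b, a, hb, ha, by rwa [mul_comm] at hab⟩
  loopless := by constructor; rintro u ⟨h, -⟩; exact h rfl

/-- `I` is a maximal element of the family `F = {ann x : 0 ≠ x ∈ R}`. -/
def MaxAnn (R : Type*) [CommRing R] (I : Ideal R) : Prop :=
  (∃ x : R, x ≠ 0 ∧ I = ann R x) ∧
    ∀ y : R, y ≠ 0 → I ≤ ann R y → I = ann R y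


/-!
Pick `x` with `P = ann x` maximal among annihilators of nonzero elements; `P` is prime, so every
zero divisor `z ∉ P` has `ann z ⊆ P`, whence `N[z] ⊆ N[x]`, and regularity forces `N[z] = N[x]`.
Comparing `N[x + b]` with `N[x]` for suitable `b ∈ P` then rules out all cases:
* `x² ≠ 0`: `P \ {0}` is a single class `[w]`, so `[x]` has degree `1`, while `[w]` is adjacent
  to `[x]` and to every third vertex;
* `x² = 0` and some zero divisor `z ∉ P`, say `z b = 0`: then `ann z ⊆ ann b`, so `[b]` has the
  neighbours of `[z]` (except possibly `[b]`) together with `[x]` and `[z]`;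
* `x² = 0` and `P` contains every zero divisor: `[x]` is adjacent to every other vertex, so the
  graph is complete; of two distinct classes one is then square-zero, and square-zero classes
  equal `[x]`.
-/

namespace SimpleGraph

variable {V : Type*} (G : SimpleGraph V)

/-- Regularity phrased through `Set.ncard`, so that no `Fintype` instances are needed. -/
def IsRegular : Prop :=
  ∀ u v : V, (G.neighborSet u).ncard = (G.neighborSet v).ncard

variable {G} [Finite V]

theorem IsRegular.neighborSet_eq_of_subset (hG : G.IsRegular) {u v : V}
    (h : G.neighborSet u ⊆ G.neighborSet v) : G.neighborSet u = G.neighborSet v :=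
  Set.eq_of_subset_of_ncard_le h (hG v u).le

theorem IsRegular.adj_of_ne (hG : G.IsRegular) {v : V} (hv : ∀ w, w ≠ v → G.Adj v w)
    {u w : V} (huw : u ≠ w) : G.Adj u w := by
  have hsub : ∀ y, G.neighborSet y ⊆ {y}ᶜ := fun y t ht h => by
    rw [Set.mem_singleton_iff] at h
    subst h
    exact G.irrefl ht
  have hNv : G.neighborSet v = {v}ᶜ :=
    (hsub v).antisymm fun t ht => hv t ht
  have hNu : G.neighborSet u = {u}ᶜ := by
    refine Set.eq_of_subset_of_ncard_le (hsub u) ?_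
    rw [hG u v, hNv, Set.ncard_compl, Set.ncard_compl, Set.ncard_singleton, Set.ncard_singleton]
  show w ∈ G.neighborSet u
  rw [hNu]
  exact fun h => huw (Set.mem_singleton_iff.mp h).symm

end SimpleGraph

theorem exists_ne_ne_of_three_le_card {α : Type*} (h : 3 ≤ Nat.card α) (a b : α) :
    ∃ c, c ≠ a ∧ c ≠ b := by
  by_contra! hc
  have hsub : (Set.univ : Set α) ⊆ {a, b} := fun c _ => by
    by_cases hca : c = a
    · exact Or.inl hca
    · exact Or.inr (hc c hca)
  have := (Set.ncard_le_ncard hsub).trans (Set.ncard_insert_le a {b})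
  rw [Set.ncard_univ, Set.ncard_singleton] at this
  omega

section GammaE

variable {R : Type*} [CommRing R]

theorem mem_ann_iff {a x : R} : a ∈ ann R x ↔ a * x = 0 := by
  rw [ann, Ideal.mem_torsionOf_iff, smul_eq_mul]

theorem ann_neg (x : R) : ann R (-x) = ann R x := by
  ext a
  simp [mem_ann_iff]

theorem cls_eq_cls_iff {a b : ZD R} : cls R a = cls R b ↔ ann R a.1 = ann R b.1 :=
  Quotient.eq

theorem cls_surjective : Function.Surjective (cls R) :=
  Quotient.mk_surjective

theorem cls_ne_cls_of_mem_of_notMem {a b : ZD R} {t : R} (ha : t ∈ ann R a.1)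
    (hb : t ∉ ann R b.1) : cls R a ≠ cls R b := fun h =>
  hb (cls_eq_cls_iff.mp h ▸ ha)

theorem gammaE_adj_cls_iff {a b : ZD R} :
    (gammaE R).Adj (cls R a) (cls R b) ↔ cls R a ≠ cls R b ∧ a.1 * b.1 = 0 := by
  refine ⟨fun ⟨hne, a', b', ha, hb, hab⟩ => ⟨hne, ?_⟩, fun ⟨hne, hab⟩ => ⟨hne, a, b, rfl, rfl, hab⟩⟩
  have hb'a : b'.1 ∈ ann R a.1 :=
    cls_eq_cls_iff.mp ha ▸ mem_ann_iff.mpr (by rw [mul_comm]; exact hab)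
  have hab' : a.1 ∈ ann R b.1 :=
    cls_eq_cls_iff.mp hb ▸ mem_ann_iff.mpr (by rw [mul_comm]; exact mem_ann_iff.mp hb'a)
  exact mem_ann_iff.mp hab'

theorem MaxAnn.isPrime {I : Ideal R} (hI : MaxAnn R I) : I.IsPrime := by
  obtain ⟨⟨x, hx0, rfl⟩, hmax⟩ := hI
  refine ⟨fun htop => hx0 ?_, fun {a b} hab => or_iff_not_imp_right.mpr fun hb => ?_⟩
  · simpa using mem_ann_iff.mp ((Ideal.eq_top_iff_one _).mp htop)
  have hle : ann R x ≤ ann R (b * x) := fun c hc =>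
    mem_ann_iff.mpr (by rw [mul_left_comm, mem_ann_iff.mp hc, mul_zero])
  rw [hmax _ (fun h => hb (mem_ann_iff.mpr h)) hle, mem_ann_iff, ← mul_assoc]
  exact mem_ann_iff.mp hab

theorem exists_maxAnn [IsNoetherianRing R] (z : ZD R) : ∃ x : ZD R, MaxAnn R (ann R x.1) := by
  obtain ⟨hz0, y, hy0, hzy⟩ := z.2
  -- the bound `ann z ≤ I` keeps `y ∈ ann x`, so the maximal `x` is again a zero divisor
  obtain ⟨_, ⟨x, hx0, hzx, rfl⟩, hmax⟩ := set_has_maximal_iff_noetherian.mpr ‹_›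
    {I : Ideal R | ∃ x : R, x ≠ 0 ∧ ann R z.1 ≤ I ∧ I = ann R x} ⟨_, z.1, hz0, le_rfl, rfl⟩
  have hyx : y * x = 0 := mem_ann_iff.mp (hzx (mem_ann_iff.mpr (by rw [mul_comm]; exact hzy)))
  refine ⟨⟨x, hx0, y, hy0, by rw [mul_comm]; exact hyx⟩, ⟨x, hx0, rfl⟩, fun w hw hle => ?_⟩
  exact hle.eq_of_not_lt (hmax _ ⟨w, hw, hzx.trans hle, rfl⟩)

theorem mul_eq_zero_of_isPrime_ann {x z c : R} (hP : (ann R x).IsPrime) (hzx : z * x ≠ 0)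
    (hcz : c * z = 0) : c * x = 0 := by
  refine mem_ann_iff.mp ((hP.mem_or_mem ?_).resolve_right fun h => hzx (mem_ann_iff.mp h))
  rw [hcz]
  exact zero_mem _

theorem adj_cls_of_mul_eq_zero {x t : ZD R} (hxx : x.1 * x.1 ≠ 0) (htx : t.1 * x.1 = 0) :
    (gammaE R).Adj (cls R x) (cls R t) :=
  gammaE_adj_cls_iff.mpr
    ⟨(cls_ne_cls_of_mem_of_notMem (mem_ann_iff.mpr (by rw [mul_comm]; exact htx))
      fun h => hxx (mem_ann_iff.mp h)).symm, by rw [mul_comm]; exact htx⟩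

theorem mul_self_eq_zero_or_mul_self_eq_zero {a c : ZD R} {y : R} (hy : y ≠ 0)
    (hay : a.1 * y = 0) (hcy : c.1 * y = 0)
    (hcomplete : ∀ a c : ZD R, cls R a ≠ cls R c → a.1 * c.1 = 0) (hac : cls R a ≠ cls R c) :
    a.1 * a.1 = 0 ∨ c.1 * c.1 = 0 := by
  have hca : c.1 * a.1 = 0 := by rw [mul_comm]; exact hcomplete a c hac
  have hs0 : a.1 + c.1 ≠ 0 := fun h =>
    hac (cls_eq_cls_iff.mpr (by rw [eq_neg_of_add_eq_zero_left h, ann_neg]))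
  let s : ZD R := ⟨a.1 + c.1, hs0, y, hy, by rw [add_mul, hay, hcy, add_zero]⟩
  by_cases h : cls R s = cls R a
  · right
    have hcs : c.1 * (a.1 + c.1) = 0 :=
      mem_ann_iff.mp ((cls_eq_cls_iff.mp h).symm ▸ mem_ann_iff.mpr hca : c.1 ∈ ann R s.1)
    rwa [mul_add, hca, zero_add] at hcs
  · left
    have hsa : (a.1 + c.1) * a.1 = 0 := hcomplete s a h
    rwa [add_mul, hca, add_zero] at hsa

theorem cls_eq_of_mul_self_eq_zero {x a : ZD R} (hx : MaxAnn R (ann R x.1))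
    (hcomplete : ∀ a c : ZD R, cls R a ≠ cls R c → a.1 * c.1 = 0) (ha : a.1 * a.1 = 0) :
    cls R a = cls R x := by
  refine (cls_eq_cls_iff.mpr (hx.2 a.1 a.2.1 fun t ht => ?_)).symm
  by_cases ht0 : t = 0
  · rw [ht0]
    exact zero_mem _
  let t' : ZD R := ⟨t, ht0, x.1, x.2.1, mem_ann_iff.mp ht⟩
  by_cases h : cls R t' = cls R a
  · have hat : a.1 ∈ ann R t := (cls_eq_cls_iff.mp h).symm ▸ mem_ann_iff.mpr ha
    rw [mem_ann_iff, mul_comm]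
    exact mem_ann_iff.mp hat
  · exact mem_ann_iff.mpr (hcomplete t' a h)

variable [Finite (GammaEV R)]

theorem neighborSet_cls_eq_of_mul_ne_zero (hG : (gammaE R).IsRegular) {x z : ZD R}
    (hP : (ann R x.1).IsPrime) (hzx : z.1 * x.1 ≠ 0) :
    (gammaE R).neighborSet (cls R z) = (gammaE R).neighborSet (cls R x) := by
  refine hG.neighborSet_eq_of_subset fun u hu => ?_
  obtain ⟨c, rfl⟩ := cls_surjective u
  obtain ⟨-, hzc⟩ := gammaE_adj_cls_iff.mp hu
  have hcx := mul_eq_zero_of_isPrime_ann hP hzx (by rw [mul_comm]; exact hzc)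
  exact gammaE_adj_cls_iff.mpr
    ⟨(cls_ne_cls_of_mem_of_notMem (mem_ann_iff.mpr hzc) fun h => hzx (mem_ann_iff.mp h)).symm,
      by rw [mul_comm]; exact hcx⟩

theorem ann_le_ann_of_mul_eq_zero (hG : (gammaE R).IsRegular) {x z : ZD R}
    (hx : MaxAnn R (ann R x.1)) (hxx : x.1 * x.1 = 0) (hzx : z.1 * x.1 ≠ 0) {b : R}
    (hzb : z.1 * b = 0) : ann R z.1 ≤ ann R b := by
  have hP := hx.isPrime
  have hbx := mul_eq_zero_of_isPrime_ann hP hzx (by rw [mul_comm]; exact hzb)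
  have hzs : z.1 * (x.1 + b) = z.1 * x.1 := by rw [mul_add, hzb, add_zero]
  have hsx : (x.1 + b) * x.1 = 0 := by rw [add_mul, hxx, hbx, add_zero]
  let s : ZD R := ⟨x.1 + b, fun h => hzx (by rw [← hzs, h, mul_zero]), x.1, x.2.1, hsx⟩
  -- otherwise `[s]` would be a neighbour of `[x]`, hence of `[z]`
  have hs : cls R s = cls R x := by
    by_contra hne
    have hadj : cls R s ∈ (gammaE R).neighborSet (cls R x) :=
      gammaE_adj_cls_iff.mpr ⟨Ne.symm hne, by rw [mul_comm]; exact hsx⟩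
    rw [← neighborSet_cls_eq_of_mul_ne_zero hG hP hzx] at hadj
    exact hzx (hzs ▸ (gammaE_adj_cls_iff.mp hadj).2)
  intro c hc
  have hcx := mul_eq_zero_of_isPrime_ann hP hzx (mem_ann_iff.mp hc)
  have hcs : c * (x.1 + b) = 0 :=
    mem_ann_iff.mp ((cls_eq_cls_iff.mp hs).symm ▸ mem_ann_iff.mpr hcx : c ∈ ann R s.1)
  rw [mul_add, hcx, zero_add] at hcs
  exact mem_ann_iff.mpr hcs

theorem not_isRegular_of_mul_self_eq_zero_of_mul_ne_zero {x z : ZD R}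
    (hx : MaxAnn R (ann R x.1)) (hxx : x.1 * x.1 = 0) (hzx : z.1 * x.1 ≠ 0) :
    ¬(gammaE R).IsRegular := by
  intro hG
  obtain ⟨hz0, b, hb0, hzb⟩ := z.2
  let b' : ZD R := ⟨b, hb0, z.1, hz0, by rw [mul_comm]; exact hzb⟩
  have hP := hx.isPrime
  have hNz := neighborSet_cls_eq_of_mul_ne_zero hG hP hzx
  have hbx := mul_eq_zero_of_isPrime_ann hP hzx (by rw [mul_comm]; exact hzb)
  have hz : z.1 ∉ ann R x.1 := fun h => hzx (mem_ann_iff.mp h)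
  have hxz : x.1 ∉ ann R z.1 := fun h => hzx (by rw [mul_comm]; exact mem_ann_iff.mp h)
  -- `[x]` and `[z]` are two extra neighbours of `[b]`, at the cost of at most `[b]` itself
  have hsub : insert (cls R x) (insert (cls R z) ((gammaE R).neighborSet (cls R z))) ⊆
      insert (cls R b') ((gammaE R).neighborSet (cls R b')) := by
    rintro u (rfl | rfl | hu)
    · exact Or.inr (gammaE_adj_cls_iff.mpr
        ⟨cls_ne_cls_of_mem_of_notMem (mem_ann_iff.mpr hzb) hz, hbx⟩)
    · exact Or.inr (gammaE_adj_cls_iff.mpr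
        ⟨cls_ne_cls_of_mem_of_notMem (mem_ann_iff.mpr (by rw [mul_comm]; exact hbx)) hxz,
          by rw [mul_comm]; exact hzb⟩)
    · obtain ⟨c, rfl⟩ := cls_surjective u
      have hcb : c.1 * b = 0 := mem_ann_iff.mp (ann_le_ann_of_mul_eq_zero hG hx hxx hzx hzb
        (mem_ann_iff.mpr (by rw [mul_comm]; exact (gammaE_adj_cls_iff.mp hu).2)))
      by_cases h : cls R c = cls R b'
      · exact Or.inl h
      · exact Or.inr (gammaE_adj_cls_iff.mpr ⟨Ne.symm h, by rw [mul_comm]; exact hcb⟩)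
  have hx_notMem : cls R x ∉ insert (cls R z) ((gammaE R).neighborSet (cls R z)) := by
    rintro (h | h)
    · exact cls_ne_cls_of_mem_of_notMem (mem_ann_iff.mpr hxx) hxz h
    · rw [hNz] at h
      exact (gammaE R).irrefl h
  have hcard := (Set.ncard_le_ncard hsub).trans (Set.ncard_insert_le _ _)
  rw [Set.ncard_insert_of_notMem hx_notMem,
    Set.ncard_insert_of_notMem ((gammaE R).irrefl : cls R z ∉ _), hG (cls R z) (cls R b')] at hcard
  omega

theorem not_isRegular_of_forall_mul_eq_zero (hcard : 3 ≤ Nat.card (GammaEV R)) {x : ZD R}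
    (hx : MaxAnn R (ann R x.1)) (hZ : ∀ z : ZD R, z.1 * x.1 = 0) : ¬(gammaE R).IsRegular := by
  intro hG
  have hx_adj : ∀ w, w ≠ cls R x → (gammaE R).Adj (cls R x) w := fun w hw => by
    obtain ⟨c, rfl⟩ := cls_surjective w
    exact gammaE_adj_cls_iff.mpr ⟨Ne.symm hw, by rw [mul_comm]; exact hZ c⟩
  have hcomplete : ∀ a c : ZD R, cls R a ≠ cls R c → a.1 * c.1 = 0 := fun a c hac =>
    (gammaE_adj_cls_iff.mp (hG.adj_of_ne hx_adj hac)).2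
  obtain ⟨u, hux, -⟩ := exists_ne_ne_of_three_le_card hcard (cls R x) (cls R x)
  obtain ⟨w, hwx, hwu⟩ := exists_ne_ne_of_three_le_card hcard (cls R x) u
  obtain ⟨a, rfl⟩ := cls_surjective u
  obtain ⟨c, rfl⟩ := cls_surjective w
  rcases mul_self_eq_zero_or_mul_self_eq_zero x.2.1 (hZ a) (hZ c) hcomplete (Ne.symm hwu)
    with h | h
  · exact hux (cls_eq_of_mul_self_eq_zero hx hcomplete h)
  · exact hwx (cls_eq_of_mul_self_eq_zero hx hcomplete h)

theorem mul_ne_zero_of_mul_self_ne_zero (hG : (gammaE R).IsRegular) {x : ZD R}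
    (hx : MaxAnn R (ann R x.1)) (hxx : x.1 * x.1 ≠ 0) {b d : R} (hb : b ≠ 0) (hd : d ≠ 0)
    (hbx : b * x.1 = 0) (hdx : d * x.1 = 0) : b * d ≠ 0 := by
  intro hbd
  have hsx : (x.1 + b) * x.1 = x.1 * x.1 := by rw [add_mul, hbx, add_zero]
  let s : ZD R := ⟨x.1 + b, fun h => hxx (by rw [← hsx, h, zero_mul]), d, hd,
    by rw [add_mul, hbd, add_zero, mul_comm, hdx]⟩
  have hNs := neighborSet_cls_eq_of_mul_ne_zero hG hx.isPrime (z := s) (hsx ▸ hxx)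
  -- the neighbours of `[x]` are those of `[x + b]`, so `b` kills all of `ann x`
  have hle : ann R x.1 ≤ ann R b := fun t ht => by
    by_cases ht0 : t = 0
    · rw [ht0]
      exact zero_mem _
    have htx := mem_ann_iff.mp ht
    have hadj : cls R ⟨t, ht0, x.1, x.2.1, htx⟩ ∈ (gammaE R).neighborSet (cls R s) :=
      hNs ▸ adj_cls_of_mul_eq_zero hxx htx
    have hst : (x.1 + b) * t = 0 := (gammaE_adj_cls_iff.mp hadj).2
    rw [add_mul, mul_comm x.1 t, htx, zero_add] at hst
    rw [mem_ann_iff, mul_comm]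
    exact hst
  have hxb : x.1 ∈ ann R b := mem_ann_iff.mpr (by rw [mul_comm]; exact hbx)
  rw [← hx.2 b hb hle] at hxb
  exact hxx (mem_ann_iff.mp hxb)

theorem cls_eq_of_mul_eq_zero (hG : (gammaE R).IsRegular) {x : ZD R}
    (hx : MaxAnn R (ann R x.1)) (hxx : x.1 * x.1 ≠ 0) {c d : ZD R} (hcx : c.1 * x.1 = 0)
    (hdx : d.1 * x.1 = 0) : cls R c = cls R d := by
  suffices key : ∀ c d : ZD R, c.1 * x.1 = 0 → d.1 * x.1 = 0 → ann R c.1 ≤ ann R d.1 from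
    cls_eq_cls_iff.mpr ((key c d hcx hdx).antisymm (key d c hdx hcx))
  intro c d hcx hdx a ha
  by_cases ha0 : a = 0
  · rw [ha0]
    exact zero_mem _
  have hac := mem_ann_iff.mp ha
  have hax : a * x.1 ≠ 0 := fun hax =>
    mul_ne_zero_of_mul_self_ne_zero hG hx hxx ha0 c.2.1 hax hcx hac
  let a' : ZD R := ⟨a, ha0, c.1, c.2.1, hac⟩
  have hadj : cls R d ∈ (gammaE R).neighborSet (cls R a') :=
    neighborSet_cls_eq_of_mul_ne_zero hG hx.isPrime (z := a') hax ▸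
      adj_cls_of_mul_eq_zero hxx hdx
  exact mem_ann_iff.mpr (gammaE_adj_cls_iff.mp hadj).2

theorem not_isRegular_of_mul_self_ne_zero (hcard : 3 ≤ Nat.card (GammaEV R)) {x : ZD R}
    (hx : MaxAnn R (ann R x.1)) (hxx : x.1 * x.1 ≠ 0) : ¬(gammaE R).IsRegular := by
  intro hG
  obtain ⟨-, w, hw0, hxw⟩ := x.2
  have hwx : w * x.1 = 0 := by rw [mul_comm]; exact hxw
  let w' : ZD R := ⟨w, hw0, x.1, x.2.1, hwx⟩
  have hNx : (gammaE R).neighborSet (cls R x) ⊆ {cls R w'} := fun u hu => by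
    obtain ⟨c, rfl⟩ := cls_surjective u
    exact cls_eq_of_mul_eq_zero hG hx hxx
      (d := w') (by rw [mul_comm]; exact (gammaE_adj_cls_iff.mp hu).2) hwx
  obtain ⟨u, hux, huw⟩ := exists_ne_ne_of_three_le_card hcard (cls R x) (cls R w')
  obtain ⟨v, rfl⟩ := cls_surjective u
  have hvx : v.1 * x.1 ≠ 0 := fun h => huw (cls_eq_of_mul_eq_zero hG hx hxx h hwx)
  have hxw' := adj_cls_of_mul_eq_zero (t := w') hxx hwx
  have hvw' : cls R w' ∈ (gammaE R).neighborSet (cls R v) := by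
    rw [neighborSet_cls_eq_of_mul_ne_zero hG hx.isPrime hvx]
    exact hxw'
  have hsub : {cls R x, cls R v} ⊆ (gammaE R).neighborSet (cls R w') := by
    rintro t (rfl | rfl)
    · exact hxw'.symm
    · exact ((gammaE R).mem_neighborSet _ _).mp hvw' |>.symm
  have h2 := (Set.ncard_pair (Ne.symm hux)).symm.trans_le (Set.ncard_le_ncard hsub)
  have h1 := (Set.ncard_le_ncard hNx).trans_eq (Set.ncard_singleton _)
  rw [hG (cls R w') (cls R x)] at h2
  omega

end GammaE

theorem stmt8 (R : Type*) [CommRing R] [IsNoetherianRing R] [Finite (GammaEV R)]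
    (hcard : 3 ≤ Nat.card (GammaEV R)) :
    ∃ u v : GammaEV R,
      ((gammaE R).neighborSet u).ncard ≠ ((gammaE R).neighborSet v).ncard := by
  by_contra! hreg
  obtain ⟨u⟩ : Nonempty (GammaEV R) := (Nat.card_pos_iff.mp (by omega)).1
  obtain ⟨z, -⟩ := cls_surjective u
  obtain ⟨x, hx⟩ := exists_maxAnn z
  by_cases hxx : x.1 * x.1 = 0
  · obtain hZ | ⟨z, hzx⟩ := forall_or_exists_not fun z : ZD R => z.1 * x.1 = 0
    · exact not_isRegular_of_forall_mul_eq_zero hcard hx hZ hreg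
    · exact not_isRegular_of_mul_self_eq_zero_of_mul_ne_zero hx hxx hzx hreg
  · exact not_isRegular_of_mul_self_ne_zero hcard hx hxx hreg
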